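/- Let G be the directed 2-cycle with vertices x, y and edges e (from y to x) and f (from x to y). Define f₀: ℕ → ℤ with f₀(0) = 0, f₀(n+1) ∈ {f₀(n)−1, f₀(n)+1} for all n, sup_n f₀(n) = ∞ and inf_n f₀(n) = −∞ (such f₀ exists). Define the path weight α(v) = 1 if s(v) = x and α(v) = 2^{f₀(|v|)} if s(v) = y. Then the left weight λ_α is left-bounded, but its canonical right companion ρ = ρ_α satisfies G⁺_ρ = {x, y} ∪ {(ef)^k, (fe)^k : k ≥ 1}; in particular ρ(u) = ∞ for every path u of odd length. -/

import Mathlib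

open scoped Classical

noncomputable section

/-- The set of all finite paths of a directed graph (quiver), including
vertices as paths of length `0`. -/
def PathIn (V : Type u) [Quiver.{w} V] : Type (max u w) :=
  Σ a b : V, Quiver.Path a b

namespace PathIn

variable {V : Type u} [Quiver.{w} V]

/-- The source vertex `s(p)` of a path. -/
def src (p : PathIn V) : V := p.1

/-- The range vertex `r(p)` of a path. -/
def tgt (p : PathIn V) : V := p.2.1

/-- The length `|p|` of a path. -/
def length (p : PathIn V) : ℕ := p.2.2.length

/-- A vertex, regarded as a path of length `0`. -/
def ofVertex (x : V) : PathIn V := ⟨x, x, Quiver.Path.nil⟩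

/-- A path which is a single edge. -/
def IsEdge (p : PathIn V) : Prop := p.length = 1

/-- `Comp w v`: the product `wv` (first traverse `v`, then `w`) is a path,
i.e. `s(w) = r(v)`. -/
def Comp (w v : PathIn V) : Prop := w.src = v.tgt

/-- The product path `wv` (first traverse `v`, then `w`); junk value `w` if
not composable. -/
def mul (w v : PathIn V) : PathIn V :=
  if h : w.src = v.tgt then ⟨v.1, w.2.1, v.2.2.comp (w.2.2.cast h rfl)⟩ else w

end PathIn

variable {V : Type u} [Quiver.{w} V]

/-- A left weight on the path semigroupoid of `G`: nonnegative, nonzero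
exactly on composable pairs, and satisfying the left cocycle condition. -/
def IsLeftWeight (l : PathIn V → PathIn V → ℝ) : Prop :=
  (∀ v w, 0 ≤ l v w) ∧
  (∀ v w, 0 < l v w ↔ PathIn.Comp w v) ∧
  (∀ v w₁ w₂, PathIn.Comp w₁ v → PathIn.Comp w₂ w₁ →
    l v (PathIn.mul w₂ w₁) = l (PathIn.mul w₁ v) w₂ * l v w₁)

/-- A right weight on the path semigroupoid of `G`. -/
def IsRightWeight (r : PathIn V → PathIn V → ℝ) : Prop :=
  (∀ v u, 0 ≤ r v u) ∧
  (∀ v u, 0 < r v u ↔ PathIn.Comp v u) ∧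
  (∀ v u₁ u₂, PathIn.Comp v u₁ → PathIn.Comp u₁ u₂ →
    r v (PathIn.mul u₁ u₂) = r (PathIn.mul v u₁) u₂ * r v u₁)

/-- A path weight: strictly positive, equal to `1` on vertices. -/
def IsPathWeight (α : PathIn V → ℝ) : Prop :=
  (∀ p, 0 < α p) ∧ (∀ x : V, α (PathIn.ofVertex x) = 1)

/-- The left weight `λ_α` associated with a path weight `α`. -/
def leftOf (α : PathIn V → ℝ) (v w : PathIn V) : ℝ :=
  if PathIn.Comp w v then α (PathIn.mul w v) / α v else 0

/-- The right weight `ρ_α` associated with a path weight `α`. -/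
def rightOf (α : PathIn V → ℝ) (v u : PathIn V) : ℝ :=
  if PathIn.Comp v u then α (PathIn.mul v u) / α v else 0

/-- The path weight `α_λ` associated with a left weight: `α_λ(v) = λ(s(v),v)`. -/
def pwOf (l : PathIn V → PathIn V → ℝ) (v : PathIn V) : ℝ :=
  l (PathIn.ofVertex v.src) v

/-- `λ` is left-bounded at `w`, i.e. `λ(w) = sup_v λ(v,w) < ∞`. -/
def LeftBddAt (l : PathIn V → PathIn V → ℝ) (w : PathIn V) : Prop :=
  BddAbove (Set.range fun v => l v w)

/-- `λ` is left-bounded. -/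
def LeftBdd (l : PathIn V → PathIn V → ℝ) : Prop := ∀ w, LeftBddAt l w

/-- `ρ` is right-bounded at `u`, i.e. `ρ(u) = sup_v ρ(v,u) < ∞`. -/
def RightBddAt (r : PathIn V → PathIn V → ℝ) (u : PathIn V) : Prop :=
  BddAbove (Set.range fun v => r v u)

/-- `ρ` is right-bounded. -/
def RightBdd (r : PathIn V → PathIn V → ℝ) : Prop := ∀ u, RightBddAt r u

/-- `ρ` is a right companion to `λ`: it is a right weight and the pair
`(λ, ρ)` satisfies the commuting square condition at every `(w, u)`. -/
def IsRightCompanion (l r : PathIn V → PathIn V → ℝ) : Prop :=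
  IsRightWeight r ∧
  ∀ w u v, PathIn.Comp w v → PathIn.Comp v u →
    r (PathIn.mul w v) u * l v w = l (PathIn.mul v u) w * r v u

/-- The Fock space `H_G = ℓ²(G⁺)` of the graph. -/
abbrev FockSpace (V : Type u) [Quiver.{w} V] : Type _ := lp (fun _ : PathIn V => ℂ) 2

/-- The canonical orthonormal basis vector `ξ_v` of the Fock space. -/
def xi (v : PathIn V) : FockSpace V := lp.single 2 v 1

end

/-- The two vertices of the directed 2-cycle. -/
inductive TwoV : Type
  | vx : TwoV
  | vy : TwoV
deriving DecidableEq

/-- The directed 2-cycle: one edge in each direction between the two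
vertices. -/
instance : Quiver.{0} TwoV := ⟨fun a b => PLift (a ≠ b)⟩

/-- The edge `e`, from `y` to `x`. -/
def edgeE : TwoV.vy ⟶ TwoV.vx := PLift.up (by decide)

/-- The edge `f`, from `x` to `y`. -/
def edgeF : TwoV.vx ⟶ TwoV.vy := PLift.up (by decide)

/-- The path `ef` (first `f`, then `e`), a loop at `x`. -/
def efPath : Quiver.Path TwoV.vx TwoV.vx := (Quiver.Path.nil.cons edgeF).cons edgeE

/-- The path `fe` (first `e`, then `f`), a loop at `y`. -/
def fePath : Quiver.Path TwoV.vy TwoV.vy := (Quiver.Path.nil.cons edgeE).cons edgeF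

/-- The path `(ef)^k`. -/
def efPow : ℕ → Quiver.Path TwoV.vx TwoV.vx
  | 0 => Quiver.Path.nil
  | k + 1 => (efPow k).comp efPath

/-- The path `(fe)^k`. -/
def fePow : ℕ → Quiver.Path TwoV.vy TwoV.vy
  | 0 => Quiver.Path.nil
  | k + 1 => (fePow k).comp fePath

/-- `(ef)^k` as an element of the path semigroupoid. -/
def EF (k : ℕ) : PathIn TwoV := ⟨TwoV.vx, TwoV.vx, efPow k⟩

/-- `(fe)^k` as an element of the path semigroupoid. -/
def FE (k : ℕ) : PathIn TwoV := ⟨TwoV.vy, TwoV.vy, fePow k⟩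

/-! ### Auxiliary lemmas -/

section MyAux

/-- The other vertex. -/
def otherV : TwoV → TwoV
  | TwoV.vx => TwoV.vy
  | TwoV.vy => TwoV.vx

lemma otherV_ne (a : TwoV) : otherV a ≠ a := by cases a <;> decide

instance (a b : TwoV) : Subsingleton (a ⟶ b) :=
  ⟨fun e f => by change PLift (a ≠ b) at e f; cases e; cases f; rfl⟩

lemma hom_tgt {a b : TwoV} (e : a ⟶ b) : b = otherV a := by
  cases a <;> cases b <;> first | rfl | exact absurd rfl e.down

/-- The canonical edge out of a vertex. -/
def edgeTo (a : TwoV) : a ⟶ otherV a := PLift.up (otherV_ne a).symm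

/-- The canonical path of length `n` starting at `a`. -/
def cpath (a : TwoV) : ℕ → Σ b, Quiver.Path a b
  | 0 => ⟨a, Quiver.Path.nil⟩
  | n + 1 => ⟨otherV (cpath a n).1, (cpath a n).2.cons (edgeTo (cpath a n).1)⟩

lemma cpath_length (a : TwoV) (n : ℕ) : (cpath a n).2.length = n := by
  induction n with
  | zero => rfl
  | succ n ih => simpa [cpath, Quiver.Path.length_cons] using ih

lemma path_eq_cpath {a : TwoV} : ∀ {b : TwoV} (p : Quiver.Path a b),
    (⟨b, p⟩ : Σ b, Quiver.Path a b) = cpath a p.length := by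
  intro b p
  induction p with
  | nil => rfl
  | @cons b c p e ih =>
    obtain rfl : c = otherV b := hom_tgt e
    rw [Subsingleton.elim e (edgeTo b)]
    show (⟨otherV b, p.cons (edgeTo b)⟩ : Σ c, Quiver.Path a c) = cpath a (p.length + 1)
    simp only [cpath]
    rw [← ih]

/-- The canonical path as an element of `PathIn`. -/
def cpIn (a : TwoV) (n : ℕ) : PathIn TwoV := ⟨a, cpath a n⟩

lemma cpIn_src (a : TwoV) (n : ℕ) : (cpIn a n).src = a := rfl

lemma cpIn_length (a : TwoV) (n : ℕ) : (cpIn a n).length = n := cpath_length a n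

lemma pathIn_eq_cpIn (u : PathIn TwoV) : u = cpIn u.src u.length := by
  show u = ⟨u.1, cpath u.1 u.2.2.length⟩
  rw [← path_eq_cpath u.2.2]
  rfl

lemma pathIn_unique (u v : PathIn TwoV) (h1 : u.src = v.src)
    (h2 : u.length = v.length) : u = v := by
  rw [pathIn_eq_cpIn u, pathIn_eq_cpIn v, h1, h2]

lemma cpIn_tgt (a : TwoV) (n : ℕ) :
    (cpIn a n).tgt = if Even n then a else otherV a := by
  induction n with
  | zero => rfl
  | succ n ih =>
    have : (cpIn a (n + 1)).tgt = otherV ((cpIn a n).tgt) := rfl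
    rw [this, ih]
    rcases Nat.even_or_odd n with h | h
    · simp [h, Nat.even_add_one, Nat.not_even_iff_odd, Nat.odd_iff.mp (by simpa using h.add_one)]
    · have h' : ¬ Even n := Nat.not_even_iff_odd.mpr h
      have h'' : Even (n + 1) := by simpa [Nat.even_add_one] using h'
      simp only [if_neg h', if_pos h'']
      cases a <;> rfl

lemma even_length_of_src_eq_tgt {u : PathIn TwoV} (h : u.src = u.tgt) :
    Even u.length := by
  by_contra hodd
  have ht : u.tgt = otherV u.src := by
    conv_lhs => rw [pathIn_eq_cpIn u]
    rw [cpIn_tgt, if_neg hodd]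
  exact otherV_ne u.src (by rw [← ht, ← h])

lemma src_ne_tgt_of_odd {u : PathIn TwoV} (h : Odd u.length) :
    u.src ≠ u.tgt := fun hst =>
  (Nat.not_even_iff_odd.mpr h) (even_length_of_src_eq_tgt hst)

lemma length_cast {a b a' b' : TwoV} (h1 : a = a') (h2 : b = b')
    (p : Quiver.Path a b) : (p.cast h1 h2).length = p.length := by
  subst h1; subst h2; rfl

lemma mul_src {w v : PathIn TwoV} (h : PathIn.Comp w v) :
    (PathIn.mul w v).src = v.src := by
  have h' : w.src = v.tgt := h
  unfold PathIn.mul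
  erw [dif_pos h']
  rfl

lemma mul_length {w v : PathIn TwoV} (h : PathIn.Comp w v) :
    (PathIn.mul w v).length = v.length + w.length := by
  have h' : w.src = v.tgt := h
  unfold PathIn.mul
  erw [dif_pos h']
  show (v.2.2.comp (w.2.2.cast h' rfl)).length = _
  erw [Quiver.Path.length_comp, length_cast]
  rfl

lemma EF_length (k : ℕ) : (EF k).length = 2 * k := by
  induction k with
  | zero => rfl
  | succ k ih =>
    show (EF (k + 1)).length = _
    have : (EF (k + 1)).length = ((efPow k).comp efPath).length := rfl
    rw [this, Quiver.Path.length_comp]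
    have : (efPow k).length = 2 * k := ih
    rw [this]
    rfl

lemma FE_length (k : ℕ) : (FE k).length = 2 * k := by
  induction k with
  | zero => rfl
  | succ k ih =>
    have : (FE (k + 1)).length = ((fePow k).comp fePath).length := rfl
    rw [this, Quiver.Path.length_comp]
    have : (fePow k).length = 2 * k := ih
    rw [this]
    rfl

end MyAux

/-- on the directed 2-cycle, for the path weight built from an
unbounded ±1 walk `f₀`, the left weight `λ_α` is left-bounded but
`G⁺_ρ = {x, y} ∪ {(ef)^k, (fe)^k : k ≥ 1}`; in particular `ρ(u) = ∞` for
every path `u` of odd length. -/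
theorem two_cycle_walk_weight_odd_unbounded
    (f₀ : ℕ → ℤ) (h0 : f₀ 0 = 0)
    (hstep : ∀ n : ℕ, f₀ (n + 1) = f₀ n - 1 ∨ f₀ (n + 1) = f₀ n + 1)
    (hsup : ∀ C : ℤ, ∃ n : ℕ, C < f₀ n)
    (hinf : ∀ C : ℤ, ∃ n : ℕ, f₀ n < C)
    (α : PathIn TwoV → ℝ)
    (hα : ∀ v : PathIn TwoV,
      α v = if v.src = TwoV.vx then 1 else (2 : ℝ) ^ (f₀ v.length)) :
    LeftBdd (leftOf α) ∧
    ({u : PathIn TwoV | RightBddAt (rightOf α) u} =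
      {PathIn.ofVertex TwoV.vx, PathIn.ofVertex TwoV.vy} ∪
        {u : PathIn TwoV | ∃ k, 1 ≤ k ∧ (u = EF k ∨ u = FE k)}) ∧
    (∀ u : PathIn TwoV, Odd u.length → ¬ RightBddAt (rightOf α) u) := by
  -- basic facts about the walk f₀
  have hub : ∀ n m : ℕ, f₀ (n + m) ≤ f₀ n + m := by
    intro n m
    induction m with
    | zero => simp
    | succ m ih =>
      have e : f₀ (n + (m + 1)) = f₀ ((n + m) + 1) := rfl
      rw [e]
      rcases hstep (n + m) with h | h <;> omega
  have hle : ∀ n : ℕ, f₀ n ≤ (n : ℤ) := by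
    intro n
    have := hub 0 n
    simpa [h0] using this
  have hαx : ∀ v : PathIn TwoV, v.src = TwoV.vx → α v = 1 := by
    intro v hv; rw [hα, if_pos hv]
  have hαy : ∀ v : PathIn TwoV, v.src = TwoV.vy →
      α v = (2 : ℝ) ^ (f₀ v.length) := by
    intro v hv
    rw [hα, if_neg (by rw [hv]; decide)]
  have hone_le : ∀ m : ℕ, (1 : ℝ) ≤ 2 ^ (m : ℤ) := by
    intro m
    calc (1 : ℝ) = 2 ^ (0 : ℤ) := by norm_num
    _ ≤ 2 ^ (m : ℤ) := zpow_le_zpow_right₀ one_le_two (Int.natCast_nonneg m)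
  -- left-boundedness
  have left : LeftBdd (leftOf α) := by
    intro w
    refine ⟨(2 : ℝ) ^ (w.length : ℤ), ?_⟩
    rintro r ⟨v, rfl⟩
    show leftOf α v w ≤ _
    unfold leftOf
    split
    · rename_i h
      have hsrc := mul_src h
      have hlen := mul_length h
      cases hx : v.src with
      | vx =>
        rw [hαx _ (hsrc.trans hx), hαx v hx]
        simpa using hone_le w.length
      | vy =>
        rw [hαy _ (hsrc.trans hx), hαy v hx, hlen,
          ← zpow_sub₀ (two_ne_zero : (2 : ℝ) ≠ 0)]
        apply zpow_le_zpow_right₀ one_le_two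
        have := hub v.length w.length
        omega
    · positivity
  -- right-boundedness for loops
  have bddRt : ∀ u : PathIn TwoV, u.src = u.tgt → RightBddAt (rightOf α) u := by
    intro u hu
    refine ⟨(2 : ℝ) ^ (u.length : ℤ), ?_⟩
    rintro r ⟨v, rfl⟩
    show rightOf α v u ≤ _
    unfold rightOf
    split
    · rename_i h
      have hsrc : (PathIn.mul v u).src = u.src := mul_src h
      have hlen := mul_length h
      have hvsrc : v.src = u.src := by rw [h, ← hu]
      cases hx : u.src with
      | vx =>
        rw [hαx _ (hsrc.trans hx), hαx v (hvsrc.trans hx)]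
        simpa using hone_le u.length
      | vy =>
        rw [hαy _ (hsrc.trans hx), hαy v (hvsrc.trans hx), hlen,
          Nat.add_comm u.length v.length,
          ← zpow_sub₀ (two_ne_zero : (2 : ℝ) ≠ 0)]
        apply zpow_le_zpow_right₀ one_le_two
        have := hub v.length u.length
        omega
    · positivity
  have pow_big : ∀ C : ℝ, ∃ k : ℕ, C < 2 ^ (k : ℤ) := by
    intro C
    obtain ⟨k, hk⟩ := pow_unbounded_of_one_lt C (one_lt_two : (1 : ℝ) < 2)
    exact ⟨k, by rwa [zpow_natCast]⟩
  -- unboundedness for non-loops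
  have unbdd : ∀ u : PathIn TwoV, u.src ≠ u.tgt → ¬ RightBddAt (rightOf α) u := by
    rintro u hne ⟨C, hC⟩
    cases hs : u.src with
    | vx =>
      have ht : u.tgt = TwoV.vy := by
        cases h : u.tgt
        · exact absurd (hs.trans h.symm) hne
        · rfl
      obtain ⟨k, hk⟩ := pow_big C
      obtain ⟨n, hn⟩ := hinf (-(k : ℤ))
      have hcomp : PathIn.Comp (cpIn TwoV.vy n) u := ht.symm
      have hval : rightOf α (cpIn TwoV.vy n) u = 2 ^ (-(f₀ n)) := by
        unfold rightOf
        rw [if_pos hcomp, hαx _ ((mul_src hcomp).trans hs), hαy (cpIn TwoV.vy n) rfl,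
          cpIn_length, one_div, ← zpow_neg]
      have hle' : rightOf α (cpIn TwoV.vy n) u ≤ C := hC ⟨_, rfl⟩
      rw [hval] at hle'
      have h2 : (2 : ℝ) ^ (k : ℤ) ≤ 2 ^ (-(f₀ n)) :=
        zpow_le_zpow_right₀ one_le_two (by omega)
      linarith
    | vy =>
      have ht : u.tgt = TwoV.vx := by
        cases h : u.tgt
        · rfl
        · exact absurd (hs.trans h.symm) hne
      obtain ⟨k, hk⟩ := pow_big C
      obtain ⟨N, hN⟩ := hsup ((k : ℤ) + u.length)
      have hNle := hle N
      have hmN : u.length ≤ N := by omega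
      obtain ⟨n, rfl⟩ := Nat.exists_eq_add_of_le hmN
      have hcomp : PathIn.Comp (cpIn TwoV.vx n) u := ht.symm
      have hval : rightOf α (cpIn TwoV.vx n) u = 2 ^ (f₀ (u.length + n)) := by
        unfold rightOf
        rw [if_pos hcomp, hαy _ ((mul_src hcomp).trans hs), hαx (cpIn TwoV.vx n) rfl,
          mul_length hcomp, cpIn_length, div_one]
      have hle' : rightOf α (cpIn TwoV.vx n) u ≤ C := hC ⟨_, rfl⟩
      rw [hval] at hle'
      have h2 : (2 : ℝ) ^ (k : ℤ) ≤ 2 ^ (f₀ (u.length + n)) :=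
        zpow_le_zpow_right₀ one_le_two (by omega)
      linarith
  refine ⟨left, ?_, fun u h => unbdd u (src_ne_tgt_of_odd h)⟩
  ext u
  simp only [Set.mem_setOf_eq, Set.mem_union, Set.mem_insert_iff,
    Set.mem_singleton_iff]
  constructor
  · intro hb
    have hst : u.src = u.tgt := by
      by_contra h; exact unbdd u h hb
    obtain ⟨k, hk⟩ := even_length_of_src_eq_tgt hst
    rcases Nat.eq_zero_or_pos k with rfl | hkpos
    · left
      cases hx : u.src with
      | vx =>
        left
        exact pathIn_unique u _ hx (by show u.length = 0; omega)
      | vy =>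
        right
        exact pathIn_unique u _ hx (by show u.length = 0; omega)
    · right
      refine ⟨k, hkpos, ?_⟩
      cases hx : u.src with
      | vx =>
        left
        exact pathIn_unique u _ hx (by rw [EF_length]; omega)
      | vy =>
        right
        exact pathIn_unique u _ hx (by rw [FE_length]; omega)
  · rintro ((rfl | rfl) | ⟨k, hk, rfl | rfl⟩) <;> exact bddRt _ rfl
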